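/- Let X₀ and Z be square-integrable ℝᵈ-valued random vectors, s ∈ [0, 1), X_s = (1 − s)·X₀ + s·Z, t = arctan(s / (1 − s)), λ = √(s² + (1 − s)²), and let T map a measurable function g : ℝᵈ → ℝᵈ to the function x ↦ (1/λ)·[(1 − 2s)·x + (1 − 2s + 2s²)·g(x)]. Then for all measurable g₁, g₂ with g₁(X_s), g₂(X_s) square-integrable: E‖ T(g₁)(X_s) − (cos(t)Z − sin(t)X₀) ‖² ≤ E‖ T(g₂)(X_s) − (cos(t)Z − sin(t)X₀) ‖² if and only if E‖ g₁(X_s) − (Z − X₀) ‖² ≤ E‖ g₂(X_s) − (Z − X₀) ‖². In particular, g minimizes the flow-matching mean-squared loss at time s if and only if T(g) minimizes the TrigFlow mean-squared loss at time t. -/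

import Mathlib

open Real MeasureTheory

/-!
With `t = arctan (s / (1 - s))` one has `cos t = (1 - s) / λ` and `sin t = s / λ`, and since
`λ² = 1 - 2s + 2s²` the TrigFlow residual of `T g` is, pointwise, exactly `λ` times the
flow-matching residual of `g`. So the TrigFlow loss of `T g` is `λ²` times the flow-matching loss
of `g`. As `g ↦ T g` is an invertible affine map preserving measurability and square-integrability
of `g ∘ X_s`, minimizers correspond as well.
-/

namespace Real

theorem sqrt_one_add_div_sq {a : ℝ} (ha : 0 < a) (b : ℝ) :
    √(1 + (b / a) ^ 2) = √(a ^ 2 + b ^ 2) / a := by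
  rw [show 1 + (b / a) ^ 2 = (a ^ 2 + b ^ 2) / a ^ 2 by field_simp, sqrt_div' _ (sq_nonneg a),
    sqrt_sq ha.le]

theorem cos_arctan_div {a : ℝ} (ha : 0 < a) (b : ℝ) :
    cos (arctan (b / a)) = a / √(a ^ 2 + b ^ 2) := by
  have : 0 < √(a ^ 2 + b ^ 2) := by positivity
  rw [cos_arctan, sqrt_one_add_div_sq ha]
  field_simp

theorem sin_arctan_div {a : ℝ} (ha : 0 < a) (b : ℝ) :
    sin (arctan (b / a)) = b / √(a ^ 2 + b ^ 2) := by
  have : 0 < √(a ^ 2 + b ^ 2) := by positivity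
  rw [sin_arctan, sqrt_one_add_div_sq ha]
  field_simp

end Real

theorem flowToTrig_residual_eq_smul {E : Type*} [AddCommGroup E] [Module ℝ E] {s lam : ℝ}
    (hlam : lam ≠ 0) (hlam2 : lam ^ 2 = s ^ 2 + (1 - s) ^ 2) (x₀ z y : E) :
    (1 / lam) • ((1 - 2 * s) • ((1 - s) • x₀ + s • z) + (1 - 2 * s + 2 * s ^ 2) • y) -
        (((1 - s) / lam) • z - (s / lam) • x₀) = lam • (y - (z - x₀)) := by
  match_scalars <;> field_simp <;> linarith

theorem integral_norm_smul_sq {Ω E : Type*} [MeasurableSpace Ω] {μ : Measure Ω}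
    [NormedAddCommGroup E] [NormedSpace ℝ E] (c : ℝ) (f : Ω → E) :
    ∫ ω, ‖c • f ω‖ ^ 2 ∂μ = c ^ 2 * ∫ ω, ‖f ω‖ ^ 2 ∂μ := by
  simp only [norm_smul, mul_pow, norm_eq_abs, sq_abs, integral_const_mul]

theorem isMinOn_iff_isMinOn_of_strictMono {α β γ δ : Type*} [LinearOrder γ] [Preorder δ]
    {L₁ : α → γ} {L₂ : β → δ} {φ : γ → δ} (hφ : StrictMono φ) {T : α → β}
    (hL : ∀ g, L₂ (T g) = φ (L₁ g)) {A : Set α} {B : Set β} (hmaps : Set.MapsTo T A B)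
    (hsurj : Set.SurjOn T A B) (g : α) : IsMinOn L₁ A g ↔ IsMinOn L₂ B (T g) := by
  simp only [isMinOn_iff]
  constructor
  · intro hmin h hh
    obtain ⟨g', hg', rfl⟩ := hsurj hh
    rw [hL, hL]
    exact hφ.monotone (hmin g' hg')
  · intro hmin g' hg'
    have := hmin (T g') (hmaps hg')
    rwa [hL, hL, hφ.le_iff_le] at this

section Regressors

variable {Ω E : Type*} [MeasurableSpace Ω] [NormedAddCommGroup E] [NormedSpace ℝ E]
  [MeasurableSpace E] [BorelSpace E] [SecondCountableTopology E]

noncomputable def mseLoss (μ : Measure Ω) (X Y : Ω → E) (g : E → E) : ℝ :=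
  ∫ ω, ‖g (X ω) - Y ω‖ ^ 2 ∂μ

def admissibleRegressors (μ : Measure Ω) (X : Ω → E) : Set (E → E) :=
  {g | Measurable g ∧ MemLp (fun ω => g (X ω)) 2 μ}

variable {μ : Measure Ω} {X : Ω → E}

theorem mapsTo_smul_smul_add_smul (hX : MemLp X 2 μ) (a b c : ℝ) :
    Set.MapsTo (fun g x => c • (a • x + b • g x))
      (admissibleRegressors μ X) (admissibleRegressors μ X) := by
  rintro g ⟨hg, hgX⟩
  exact ⟨by fun_prop, ((hX.const_smul a).add (hgX.const_smul b)).const_smul c⟩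

theorem surjOn_smul_smul_add_smul (hX : MemLp X 2 μ) (a b c : ℝ) (hb : b ≠ 0) (hc : c ≠ 0) :
    Set.SurjOn (fun g x => c • (a • x + b • g x))
      (admissibleRegressors μ X) (admissibleRegressors μ X) := by
  rintro h ⟨hh, hhX⟩
  refine ⟨fun x => b⁻¹ • (c⁻¹ • h x - a • x),
    ⟨by fun_prop, ((hhX.const_smul c⁻¹).sub (hX.const_smul a)).const_smul b⁻¹⟩, ?_⟩
  funext x
  simp [smul_smul, hb, hc]

end Regressors

theorem trig_loss_le_iff_flow_loss_le_general
    {Ω : Type*} [MeasurableSpace Ω] (μ : Measure Ω)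
    {d : ℕ} (X₀ Z : Ω → EuclideanSpace ℝ (Fin d))
    (hX₀ : MemLp X₀ 2 μ) (hZ : MemLp Z 2 μ)
    (s : ℝ) (hs : s ∈ Set.Ico (0 : ℝ) 1)
    (Xs : Ω → EuclideanSpace ℝ (Fin d)) (hXs : Xs = fun ω => (1 - s) • X₀ ω + s • Z ω)
    (t : ℝ) (ht : t = arctan (s / (1 - s)))
    (lam : ℝ) (hlam : lam = Real.sqrt (s ^ 2 + (1 - s) ^ 2))
    (T : (EuclideanSpace ℝ (Fin d) → EuclideanSpace ℝ (Fin d)) →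
      (EuclideanSpace ℝ (Fin d) → EuclideanSpace ℝ (Fin d)))
    (hT : T = fun g x => (1 / lam) • ((1 - 2 * s) • x + (1 - 2 * s + 2 * s ^ 2) • g x)) :
    (∀ g₁ g₂ : EuclideanSpace ℝ (Fin d) → EuclideanSpace ℝ (Fin d),
      Measurable g₁ → Measurable g₂ →
      MemLp (fun ω => g₁ (Xs ω)) 2 μ → MemLp (fun ω => g₂ (Xs ω)) 2 μ →
      ((∫ ω, ‖T g₁ (Xs ω) - (cos t • Z ω - sin t • X₀ ω)‖ ^ 2 ∂μ ≤
          ∫ ω, ‖T g₂ (Xs ω) - (cos t • Z ω - sin t • X₀ ω)‖ ^ 2 ∂μ) ↔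
        (∫ ω, ‖g₁ (Xs ω) - (Z ω - X₀ ω)‖ ^ 2 ∂μ ≤
          ∫ ω, ‖g₂ (Xs ω) - (Z ω - X₀ ω)‖ ^ 2 ∂μ))) ∧
    (∀ g : EuclideanSpace ℝ (Fin d) → EuclideanSpace ℝ (Fin d),
      Measurable g → MemLp (fun ω => g (Xs ω)) 2 μ →
      ((∀ g' : EuclideanSpace ℝ (Fin d) → EuclideanSpace ℝ (Fin d),
          Measurable g' → MemLp (fun ω => g' (Xs ω)) 2 μ →
          ∫ ω, ‖g (Xs ω) - (Z ω - X₀ ω)‖ ^ 2 ∂μ ≤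
            ∫ ω, ‖g' (Xs ω) - (Z ω - X₀ ω)‖ ^ 2 ∂μ) ↔
        (∀ h : EuclideanSpace ℝ (Fin d) → EuclideanSpace ℝ (Fin d),
          Measurable h → MemLp (fun ω => h (Xs ω)) 2 μ →
          ∫ ω, ‖T g (Xs ω) - (cos t • Z ω - sin t • X₀ ω)‖ ^ 2 ∂μ ≤
            ∫ ω, ‖h (Xs ω) - (cos t • Z ω - sin t • X₀ ω)‖ ^ 2 ∂μ))) := by
  obtain ⟨hs0, hs1⟩ := hs
  have hlam0 : lam ≠ 0 := by rw [hlam]; positivity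
  have hlam2 : lam ^ 2 = s ^ 2 + (1 - s) ^ 2 := by rw [hlam, sq_sqrt (by positivity)]
  have hcos : cos t = (1 - s) / lam := by
    rw [ht, hlam, cos_arctan_div (by linarith), add_comm]
  have hsin : sin t = s / lam := by
    rw [ht, hlam, sin_arctan_div (by linarith), add_comm]
  have hloss : ∀ g, mseLoss μ Xs (fun ω => cos t • Z ω - sin t • X₀ ω) (T g) =
      lam ^ 2 * mseLoss μ Xs (fun ω => Z ω - X₀ ω) g := fun g => by
    simp only [mseLoss, ← integral_norm_smul_sq, hT, hXs, hcos, hsin,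
      flowToTrig_residual_eq_smul hlam0 hlam2]
  have hscale : StrictMono (lam ^ 2 * ·) := strictMono_mul_left_of_pos (by positivity)
  refine ⟨fun g₁ g₂ _ _ _ _ => ?_, fun g _ _ => ?_⟩
  · change mseLoss μ Xs _ (T g₁) ≤ mseLoss μ Xs _ (T g₂) ↔
      mseLoss μ Xs _ g₁ ≤ mseLoss μ Xs _ g₂
    rw [hloss, hloss, hscale.le_iff_le]
  have hXsL : MemLp Xs 2 μ := hXs ▸ (hX₀.const_smul (1 - s)).add (hZ.const_smul s)
  have hmaps := mapsTo_smul_smul_add_smul hXsL (1 - 2 * s) (1 - 2 * s + 2 * s ^ 2) (1 / lam)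
  have hsurj := surjOn_smul_smul_add_smul hXsL (1 - 2 * s) (1 - 2 * s + 2 * s ^ 2) (1 / lam)
    (by nlinarith) (one_div_ne_zero hlam0)
  rw [← hT] at hmaps hsurj
  simpa only [isMinOn_iff, mseLoss, admissibleRegressors, Set.mem_ofPred_eq, and_imp] using
    isMinOn_iff_isMinOn_of_strictMono hscale hloss hmaps hsurj g

/-- Let `X₀` and `Z` be square-integrable `ℝᵈ`-valued random vectors, `s ∈ [0, 1)`,
`Xs = (1 − s)·X₀ + s·Z`, `t = arctan (s / (1 − s))`, `lam = √(s² + (1 − s)²)`, and let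
`T` map a measurable `g : ℝᵈ → ℝᵈ` to `x ↦ (1/lam)·[(1 − 2s)·x + (1 − 2s + 2s²)·g x]`.
Then for all measurable `g₁, g₂` with `g₁ (Xs ·), g₂ (Xs ·)` square-integrable, the
TrigFlow losses of `T g₁, T g₂` compare exactly as the flow-matching losses of `g₁, g₂`;
in particular, `g` minimizes the flow-matching mean-squared loss at time `s` iff `T g`
minimizes the TrigFlow mean-squared loss at time `t`. -/
theorem trig_loss_le_iff_flow_loss_le
    {Ω : Type*} [MeasurableSpace Ω] (μ : Measure Ω) [IsProbabilityMeasure μ]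
    {d : ℕ} (X₀ Z : Ω → EuclideanSpace ℝ (Fin d))
    (hX₀m : Measurable X₀) (hZm : Measurable Z)
    (hX₀ : MemLp X₀ 2 μ) (hZ : MemLp Z 2 μ)
    (s : ℝ) (hs : s ∈ Set.Ico (0 : ℝ) 1)
    (Xs : Ω → EuclideanSpace ℝ (Fin d)) (hXs : Xs = fun ω => (1 - s) • X₀ ω + s • Z ω)
    (t : ℝ) (ht : t = arctan (s / (1 - s)))
    (lam : ℝ) (hlam : lam = Real.sqrt (s ^ 2 + (1 - s) ^ 2))
    (T : (EuclideanSpace ℝ (Fin d) → EuclideanSpace ℝ (Fin d)) →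
      (EuclideanSpace ℝ (Fin d) → EuclideanSpace ℝ (Fin d)))
    (hT : T = fun g x => (1 / lam) • ((1 - 2 * s) • x + (1 - 2 * s + 2 * s ^ 2) • g x)) :
    (∀ g₁ g₂ : EuclideanSpace ℝ (Fin d) → EuclideanSpace ℝ (Fin d),
      Measurable g₁ → Measurable g₂ →
      MemLp (fun ω => g₁ (Xs ω)) 2 μ → MemLp (fun ω => g₂ (Xs ω)) 2 μ →
      ((∫ ω, ‖T g₁ (Xs ω) - (cos t • Z ω - sin t • X₀ ω)‖ ^ 2 ∂μ ≤
          ∫ ω, ‖T g₂ (Xs ω) - (cos t • Z ω - sin t • X₀ ω)‖ ^ 2 ∂μ) ↔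
        (∫ ω, ‖g₁ (Xs ω) - (Z ω - X₀ ω)‖ ^ 2 ∂μ ≤
          ∫ ω, ‖g₂ (Xs ω) - (Z ω - X₀ ω)‖ ^ 2 ∂μ))) ∧
    (∀ g : EuclideanSpace ℝ (Fin d) → EuclideanSpace ℝ (Fin d),
      Measurable g → MemLp (fun ω => g (Xs ω)) 2 μ →
      ((∀ g' : EuclideanSpace ℝ (Fin d) → EuclideanSpace ℝ (Fin d),
          Measurable g' → MemLp (fun ω => g' (Xs ω)) 2 μ →
          ∫ ω, ‖g (Xs ω) - (Z ω - X₀ ω)‖ ^ 2 ∂μ ≤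
            ∫ ω, ‖g' (Xs ω) - (Z ω - X₀ ω)‖ ^ 2 ∂μ) ↔
        (∀ h : EuclideanSpace ℝ (Fin d) → EuclideanSpace ℝ (Fin d),
          Measurable h → MemLp (fun ω => h (Xs ω)) 2 μ →
          ∫ ω, ‖T g (Xs ω) - (cos t • Z ω - sin t • X₀ ω)‖ ^ 2 ∂μ ≤
            ∫ ω, ‖h (Xs ω) - (cos t • Z ω - sin t • X₀ ω)‖ ^ 2 ∂μ))) :=
  trig_loss_le_iff_flow_loss_le_general μ X₀ Z hX₀ hZ s hs Xs hXs t ht lam hlam T hT
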